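/- arXiv:2604.07157 — 3 statements merged into one kernel-verified Lean document; each statement's English description precedes it below -/
import Mathlib

section
/- Let a₁, a₂ ∈ ℝ^n (n ≥ 3) be linearly independent and a = a₁ + i a₂ ∈ ℂ^n. Then there exists a real matrix x with det x = 1 such that xᵀ a is isotropic, i.e. (xᵀ a, xᵀ a) = 0 for the standard complex bilinear form on ℂ^n. -/
open Matrix Complex

theorem stmt_4 (n : ℕ) (hn : 3 ≤ n) (a₁ a₂ : Fin n → ℝ)
    (hind : LinearIndependent ℝ ![a₁, a₂])
    (a : Fin n → ℂ) (ha : a = fun i => (a₁ i : ℂ) + Complex.I * (a₂ i : ℂ)) :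
    ∃ x : Matrix (Fin n) (Fin n) ℝ, x.det = 1 ∧
      ((x.map (fun r => (r : ℂ)))ᵀ *ᵥ a) ⬝ᵥ ((x.map (fun r => (r : ℂ)))ᵀ *ᵥ a) = 0 := by
  classical
  set i0 : Fin n := ⟨0, by omega⟩ with hi0
  set i1 : Fin n := ⟨1, by omega⟩ with hi1
  set i2 : Fin n := ⟨2, by omega⟩ with hi2
  have h01 : i0 ≠ i1 := by simp [hi0, hi1, Fin.ext_iff]
  have h02 : i0 ≠ i2 := by simp [hi0, hi2, Fin.ext_iff]
  have h12 : i1 ≠ i2 := by simp [hi1, hi2, Fin.ext_iff]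
  -- extend to a basis
  let b0 := Module.Basis.sumExtend hind
  have hb0l : b0 (Sum.inl 0) = a₁ := by
    rw [show b0 = Module.Basis.sumExtend hind from rfl, Module.Basis.sumExtend]
    simp only [Module.Basis.reindex_apply, Equiv.symm_symm]
    rw [Module.Basis.extend_apply_self]; rfl
  have hb0l1 : b0 (Sum.inl 1) = a₂ := by
    rw [show b0 = Module.Basis.sumExtend hind from rfl, Module.Basis.sumExtend]
    simp only [Module.Basis.reindex_apply, Equiv.symm_symm]
    rw [Module.Basis.extend_apply_self]; rfl
  haveI : FiniteDimensional ℝ (Fin n → ℝ) := inferInstance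
  haveI := FiniteDimensional.fintypeBasisIndex b0
  have hcard : Fintype.card (Fin 2 ⊕ Module.Basis.sumExtendIndex hind) = n := by
    have := Module.finrank_eq_card_basis b0
    simpa [Module.finrank_fintype_fun_eq_card] using this.symm
  let e0 : (Fin 2 ⊕ Module.Basis.sumExtendIndex hind) ≃ Fin n := Fintype.equivFinOfCardEq hcard
  let σ₁ : Equiv.Perm (Fin n) := Equiv.swap (e0 (Sum.inl 0)) i0
  let t : Fin n := σ₁ (e0 (Sum.inl 1))
  have ht0 : t ≠ i0 := by
    intro h
    have h2 : σ₁ (e0 (Sum.inl 1)) = σ₁ (e0 (Sum.inl 0)) :=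
      h.trans (Equiv.swap_apply_left _ _).symm
    have h3 := e0.injective (σ₁.injective h2)
    simp at h3
  let σ₂ : Equiv.Perm (Fin n) := Equiv.swap t i1
  let e : (Fin 2 ⊕ Module.Basis.sumExtendIndex hind) ≃ Fin n := (e0.trans σ₁).trans σ₂
  have he0 : e (Sum.inl 0) = i0 := by
    show σ₂ (σ₁ (e0 (Sum.inl 0))) = i0
    rw [Equiv.swap_apply_left]
    exact Equiv.swap_apply_of_ne_of_ne ht0.symm h01
  have he1 : e (Sum.inl 1) = i1 := by
    show σ₂ t = i1
    exact Equiv.swap_apply_left _ _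
  let b : Module.Basis (Fin n) ℝ (Fin n → ℝ) := b0.reindex e
  have hb0 : b i0 = a₁ := by
    rw [show b = b0.reindex e from rfl, Module.Basis.reindex_apply, ← he0, Equiv.symm_apply_apply, hb0l]
  have hb1 : b i1 = a₂ := by
    rw [show b = b0.reindex e from rfl, Module.Basis.reindex_apply, ← he1, Equiv.symm_apply_apply, hb0l1]
  -- the matrix whose columns are b j
  let M : Matrix (Fin n) (Fin n) ℝ := (Pi.basisFun ℝ (Fin n)).toMatrix b
  haveI : Invertible M := (Pi.basisFun ℝ (Fin n)).invertibleToMatrix b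
  have hMd : IsUnit M.det := M.isUnit_iff_isUnit_det.mp (isUnit_of_invertible M)
  have hMcol : ∀ j, M *ᵥ Pi.single j 1 = b j := by
    intro j
    ext i
    simp [M, mulVec_single, Module.Basis.toMatrix_apply]
  set d : ℝ := M.det with hd
  have hdne : d ≠ 0 := hMd.ne_zero
  let E : Matrix (Fin n) (Fin n) ℝ := diagonal (fun i => if i = i2 then d else 1)
  let x : Matrix (Fin n) (Fin n) ℝ := (E * M⁻¹)ᵀ
  refine ⟨x, ?_, ?_⟩
  · have : x.det = E.det * M⁻¹.det := by
      rw [show x = (E * M⁻¹)ᵀ from rfl, det_transpose, det_mul]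
    rw [this, det_nonsing_inv, det_diagonal]
    rw [Finset.prod_ite_eq' Finset.univ i2 (fun _ => d)]
    simp [hdne, Ring.mul_inverse_cancel _ hMd, ← hd]
  · have hxt : xᵀ = E * M⁻¹ := transpose_transpose _
    -- real computations
    have hM1 : M⁻¹ *ᵥ a₁ = Pi.single i0 1 := by
      rw [← hb0, ← hMcol i0, Matrix.mulVec_mulVec, nonsing_inv_mul M hMd, one_mulVec]
    have hM2 : M⁻¹ *ᵥ a₂ = Pi.single i1 1 := by
      rw [← hb1, ← hMcol i1, Matrix.mulVec_mulVec, nonsing_inv_mul M hMd, one_mulVec]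
    have hE1 : E *ᵥ Pi.single i0 1 = Pi.single i0 1 := by
      ext i
      rw [mulVec_diagonal]
      rcases eq_or_ne i i0 with rfl | h
      · simp [h02]
      · simp [Pi.single_eq_of_ne h]
    have hE2 : E *ᵥ Pi.single i1 1 = Pi.single i1 1 := by
      ext i
      rw [mulVec_diagonal]
      rcases eq_or_ne i i1 with rfl | h
      · simp [h12]
      · simp [Pi.single_eq_of_ne h]
    have hreal1 : xᵀ *ᵥ a₁ = Pi.single i0 1 := by
      rw [hxt, ← Matrix.mulVec_mulVec, hM1, hE1]
    have hreal2 : xᵀ *ᵥ a₂ = Pi.single i1 1 := by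
      rw [hxt, ← Matrix.mulVec_mulVec, hM2, hE2]
    -- complexify
    have hmap : ∀ (A : Matrix (Fin n) (Fin n) ℝ) (v : Fin n → ℝ),
        (A.map (fun r => (r : ℂ))) *ᵥ (fun i => (v i : ℂ)) = fun i => ((A *ᵥ v) i : ℂ) := by
      intro A v
      ext i
      simp [Matrix.mulVec, dotProduct, Matrix.map_apply]
    have hmt : (x.map (fun r => (r : ℂ)))ᵀ = xᵀ.map (fun r => (r : ℂ)) := by
      ext i j; simp [Matrix.map_apply]
    have haw : a = (fun i => (a₁ i : ℂ)) + Complex.I • (fun i => (a₂ i : ℂ)) := by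
      funext i; simp [ha, mul_comm]
    have hw : (x.map (fun r => (r : ℂ)))ᵀ *ᵥ a
        = (fun i => ((Pi.single i0 1 : Fin n → ℝ) i : ℂ)) + Complex.I • (fun i => ((Pi.single i1 1 : Fin n → ℝ) i : ℂ)) := by
      rw [hmt, haw, Matrix.mulVec_add, Matrix.mulVec_smul, hmap, hmap, hreal1, hreal2]
    rw [hw]
    have hs : ∀ (p q : Fin n) (hpq : p ≠ q),
        (fun i => ((Pi.single p 1 : Fin n → ℝ) i : ℂ)) ⬝ᵥ (fun i => ((Pi.single q 1 : Fin n → ℝ) i : ℂ)) = 0 := by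
      intro p q hpq
      simp only [dotProduct]
      rw [Finset.sum_eq_zero]
      intro i _
      rcases eq_or_ne i p with rfl | h
      · simp [Pi.single_eq_of_ne hpq]
      · simp [Pi.single_eq_of_ne h]
    have hss : ∀ (p : Fin n),
        (fun i => ((Pi.single p 1 : Fin n → ℝ) i : ℂ)) ⬝ᵥ (fun i => ((Pi.single p 1 : Fin n → ℝ) i : ℂ)) = 1 := by
      intro p
      simp only [dotProduct]
      rw [Finset.sum_eq_single p]
      · simp
      · intro i _ h; simp [Pi.single_eq_of_ne h]
      · intro h; exact absurd (Finset.mem_univ p) h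
    rw [add_dotProduct, dotProduct_add, dotProduct_add,
      smul_dotProduct, smul_dotProduct, dotProduct_smul, dotProduct_smul,
      hss i0, hss i1, hs i0 i1 h01, hs i1 i0 h01.symm]
    simp [Complex.I_mul_I]
end

section
/- Let a₁, a₂ ∈ ℝ^{2n} (n ≥ 2) be linearly independent and a = a₁ + i a₂. Then there exists x in the real symplectic group Sp(n,ℝ) = {x ∈ GL(2n,ℝ) : x J xᵀ = J} such that xᵀ a is isotropic with respect to the standard complex bilinear form on ℂ^{2n}. -/
/-!
The conclusion only involves `y = xᵀ`, which is again symplectic, and `y a` is isotropic exactly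
when `y a₁` and `y a₂` are orthogonal of equal Euclidean length. The isometry group of a
nondegenerate alternating form acts transitively on linearly independent pairs `(u₁, u₂)` with a
prescribed value `ω(u₁, u₂) = c`: first move `u₁` to `w₁`, then move `u₂` to `w₂` while fixing
`w₁`, each step a product of at most two transvections `x ↦ x + t ω(x, v) v`. So it suffices to
exhibit one such pair that is orthogonal of equal length; in the standard symplectic basis
`(eᵢ, fᵢ)` take `(e₁, e₂)` when `c = 0` (this needs `n ≥ 2`) and `(√|c| e₁, -(c / √|c|) f₁)`
otherwise.
-/

open Matrix Complex

namespace LinearMap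

variable {K V : Type*} [Field K] [AddCommGroup V] [Module K V] {B : LinearMap.BilinForm K V}

lemma IsOrthogonal.comp {f g : V →ₗ[K] V} (hf : B.IsOrthogonal f) (hg : B.IsOrthogonal g) :
    B.IsOrthogonal (f ∘ₗ g) := fun x y => (hf (g x) (g y)).trans (hg x y)

lemma IsOrthogonal.injective {f : V →ₗ[K] V} (hf : B.IsOrthogonal f) (hB : B.SeparatingLeft) :
    Function.Injective f :=
  (injective_iff_map_eq_zero f).2 fun x hx => hB x fun y => by rw [← hf, hx, map_zero, zero_apply]

lemma SeparatingLeft.exists_apply_eq_zero_apply_ne_zero (hB : B.SeparatingLeft) {e u : V}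
    (hu : u ∉ K ∙ e) : ∃ d, B e d = 0 ∧ B u d ≠ 0 := by
  by_contra! h
  have hker : ⨅ _ : Unit, ker (B e) ≤ ker (B u) := fun d hd => by
    simp only [Submodule.mem_iInf, mem_ker] at hd ⊢
    exact h d (hd ())
  obtain ⟨c, hc⟩ := Submodule.mem_span_singleton.1 <| by
    simpa using mem_span_of_iInf_ker_le_ker hker
  refine hu (Submodule.mem_span_singleton.2 ⟨c, ?_⟩)
  rw [← sub_eq_zero]
  refine hB _ fun y => ?_
  rw [map_sub, map_smul, hc, sub_self, zero_apply]

namespace BilinForm.IsAlt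

variable (hB : B.IsAlt)
include hB

lemma isOrthogonal_transvection (t : K) (v : V) :
    B.IsOrthogonal (transvection (t • B.flip v) v) := fun x y => by
  simp only [transvection.apply, map_add, map_smul, LinearMap.add_apply, LinearMap.smul_apply,
    flip_apply, smul_eq_mul]
  rw [hB.self_eq_zero v, ← hB.neg_eq y v]
  ring

lemma exists_isOrthogonal_apply_eq {u w : V} (huw : B u w ≠ 0) :
    ∃ f : V →ₗ[K] V, B.IsOrthogonal f ∧ f u = w ∧ ∀ e, B e u = B e w → f e = e := by
  refine ⟨transvection ((B u w)⁻¹ • B.flip (w - u)) (w - u),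
    hB.isOrthogonal_transvection _ _, ?_, fun e he => ?_⟩
  · simp [transvection.apply, hB.self_eq_zero u, inv_mul_cancel₀ huw]
  · have : B e (w - u) = 0 := by rw [map_sub, he, sub_self]
    rw [transvection.apply, smul_apply, flip_apply, this, smul_zero, zero_smul, add_zero]

variable (hB' : B.SeparatingLeft)
include hB'

lemma exists_isOrthogonal_fix_apply_eq {e u w : V} (he : B e u = B e w) (hu : u ∉ K ∙ e)
    (hw : w ∉ K ∙ e) : ∃ f : V →ₗ[K] V, B.IsOrthogonal f ∧ f e = e ∧ f u = w := by
  by_cases huw : B u w ≠ 0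
  · obtain ⟨f, hf, hfu, hfix⟩ := hB.exists_isOrthogonal_apply_eq huw
    exact ⟨f, hf, hfix e he, hfu⟩
  push Not at huw
  -- Pass through `z = u + d` with `B e d = 0`, chosen so that `B u z ≠ 0` and `B z w ≠ 0`.
  obtain ⟨d, hed, hud, hdw⟩ : ∃ d, B e d = 0 ∧ B u d ≠ 0 ∧ B d w ≠ 0 := by
    obtain ⟨d₁, hed₁, hud₁⟩ := hB'.exists_apply_eq_zero_apply_ne_zero hu
    obtain ⟨d₂, hed₂, hwd₂⟩ := hB'.exists_apply_eq_zero_apply_ne_zero hw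
    rw [← hB.neg_eq, neg_ne_zero] at hwd₂
    by_cases h₁ : B d₁ w = 0
    · by_cases h₂ : B u d₂ = 0
      · exact ⟨d₁ + d₂, by simp [hed₁, hed₂], by simpa [h₂], by simpa [h₁]⟩
      · exact ⟨d₂, hed₂, h₂, hwd₂⟩
    · exact ⟨d₁, hed₁, hud₁, h₁⟩
  have huz : B u (u + d) ≠ 0 := by rwa [map_add, hB.self_eq_zero, zero_add]
  have hzw : B (u + d) w ≠ 0 := by rwa [map_add, LinearMap.add_apply, huw, zero_add]
  have hez : B e u = B e (u + d) := by rw [map_add, hed, add_zero]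
  obtain ⟨f₁, hf₁, hf₁u, hf₁e⟩ := hB.exists_isOrthogonal_apply_eq huz
  obtain ⟨f₂, hf₂, hf₂z, hf₂e⟩ := hB.exists_isOrthogonal_apply_eq hzw
  refine ⟨f₂ ∘ₗ f₁, hf₂.comp hf₁, ?_, ?_⟩
  · rw [LinearMap.comp_apply, hf₁e e hez, hf₂e e (hez ▸ he)]
  · rw [LinearMap.comp_apply, hf₁u, hf₂z]

lemma exists_isOrthogonal_apply_eq_pair {u₁ u₂ w₁ w₂ : V} (hu : LinearIndependent K ![u₁, u₂])
    (hw : LinearIndependent K ![w₁, w₂]) (h : B u₁ u₂ = B w₁ w₂) :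
    ∃ f : V →ₗ[K] V, B.IsOrthogonal f ∧ f u₁ = w₁ ∧ f u₂ = w₂ := by
  have hu₁ : u₁ ≠ 0 := hu.ne_zero 0
  have hw₁ : w₁ ≠ 0 := hw.ne_zero 0
  obtain ⟨f₁, hf₁, -, hf₁u⟩ := hB.exists_isOrthogonal_fix_apply_eq hB' (e := 0) (by simp)
    (by simpa using hu₁) (by simpa using hw₁)
  have hf₁u₂ : f₁ u₂ ∉ K ∙ w₁ := by
    rw [Submodule.mem_span_singleton, not_exists]
    intro c hc
    rw [← hf₁u, ← map_smul] at hc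
    exact (LinearIndependent.pair_iff' hu₁).1 hu c (hf₁.injective hB' hc)
  have hw₂ : w₂ ∉ K ∙ w₁ := by
    rw [Submodule.mem_span_singleton, not_exists]
    exact (LinearIndependent.pair_iff' hw₁).1 hw
  obtain ⟨f₂, hf₂, hf₂w, hf₂u⟩ := hB.exists_isOrthogonal_fix_apply_eq hB'
    (by rw [← h, ← hf₁ u₁ u₂, hf₁u]) hf₁u₂ hw₂
  exact ⟨f₂ ∘ₗ f₁, hf₂.comp hf₁, by rw [LinearMap.comp_apply, hf₁u, hf₂w],
    by rw [LinearMap.comp_apply, hf₂u]⟩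

end BilinForm.IsAlt

end LinearMap

namespace Matrix

variable {l : Type*} [Fintype l] [DecidableEq l]

lemma isAlt_toBilin'_J {K : Type*} [CommRing K] : (J l K).toBilin'.IsAlt := fun v => by
  simp [Matrix.J, toBilin'_apply', fromBlocks_mulVec, dotProduct, Fintype.sum_sum_type,
    neg_mulVec, mul_comm]

lemma separatingLeft_toBilin'_J {K : Type*} [Field K] : (J l K).toBilin'.SeparatingLeft := by
  rw [separatingLeft_toBilin'_iff, separatingLeft_iff_det_ne_zero]
  exact left_ne_zero_of_mul_eq_one (J_det_mul_J_det l K)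

lemma toMatrix'_mem_symplecticGroup {K : Type*} [CommRing K] {f : (l ⊕ l → K) →ₗ[K] l ⊕ l → K}
    (hf : (J l K).toBilin'.IsOrthogonal f) : LinearMap.toMatrix' f ∈ symplecticGroup l K := by
  rw [SymplecticGroup.mem_iff']
  apply toBilin'.injective
  rw [← toBilin'_comp, toLin'_toMatrix']
  exact LinearMap.BilinForm.ext fun x y => hf x y

lemma exists_orthogonal_equal_norm_pair_toBilin'_J_eq [Nontrivial l] (c : ℝ) :
    ∃ w₁ w₂ : l ⊕ l → ℝ, LinearIndependent ℝ ![w₁, w₂] ∧ (J l ℝ).toBilin' w₁ w₂ = c ∧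
      w₁ ⬝ᵥ w₁ = w₂ ⬝ᵥ w₂ ∧ w₁ ⬝ᵥ w₂ = 0 := by
  obtain ⟨i, j, hij⟩ := exists_pair_ne l
  by_cases hc : c = 0
  · refine ⟨Pi.single (.inl i) 1, Pi.single (.inl j) 1, ?_, ?_, ?_, ?_⟩
    · refine (LinearIndependent.pair_iff' (by simp)).2 fun a h => ?_
      simpa [hij.symm] using congrFun h (.inl j)
    all_goals simp [toBilin'_single, Matrix.J, hc, hij]
  · set s := √|c|
    have hs : s ≠ 0 := by positivity
    have hs2 : s ^ 2 = |c| := Real.sq_sqrt (abs_nonneg c)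
    refine ⟨Pi.single (.inl i) s, Pi.single (.inr i) (-c / s), ?_, ?_, ?_, ?_⟩
    · refine (LinearIndependent.pair_iff' (by simpa)).2 fun a h => ?_
      exact div_ne_zero (neg_ne_zero.2 hc) hs (by simpa using (congrFun h (.inr i)).symm)
    · simp [toBilin'_apply', Matrix.J, mul_left_comm s, hs]
    · simp only [dotProduct_single, Pi.single_eq_same]
      field_simp
      rw [show s ^ 4 = (s ^ 2) ^ 2 by ring, hs2, sq_abs]
    · simp

lemma exists_isOrthogonal_toBilin'_J_orthogonal_equal_norm [Nontrivial l] {a₁ a₂ : l ⊕ l → ℝ}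
    (hind : LinearIndependent ℝ ![a₁, a₂]) :
    ∃ f : (l ⊕ l → ℝ) →ₗ[ℝ] l ⊕ l → ℝ, (J l ℝ).toBilin'.IsOrthogonal f ∧
      f a₁ ⬝ᵥ f a₁ = f a₂ ⬝ᵥ f a₂ ∧ f a₁ ⬝ᵥ f a₂ = 0 := by
  obtain ⟨w₁, w₂, hw, hc, hnorm, horth⟩ :=
    exists_orthogonal_equal_norm_pair_toBilin'_J_eq (l := l) ((J l ℝ).toBilin' a₁ a₂)
  obtain ⟨f, hf, rfl, rfl⟩ := isAlt_toBilin'_J.exists_isOrthogonal_apply_eq_pair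
    separatingLeft_toBilin'_J hind hw hc.symm
  exact ⟨f, hf, hnorm, horth⟩

variable {ι : Type*} [Fintype ι]

lemma complexify_dotProduct_self_eq_zero {b₁ b₂ : ι → ℝ} (hnorm : b₁ ⬝ᵥ b₁ = b₂ ⬝ᵥ b₂)
    (horth : b₁ ⬝ᵥ b₂ = 0) :
    (fun i => (b₁ i : ℂ) + I * b₂ i) ⬝ᵥ (fun i => (b₁ i : ℂ) + I * b₂ i) = 0 := by
  apply Complex.ext
  · simpa [dotProduct, Complex.re_sum] using sub_eq_zero.2 hnorm
  · simp only [dotProduct, Complex.im_sum, mul_im, add_re, add_im, ofReal_re, ofReal_im,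
      mul_re, I_re, I_im, zero_mul, one_mul, sub_zero, zero_add, add_zero, mul_zero]
    rw [Finset.sum_add_distrib, ← dotProduct, ← dotProduct, dotProduct_comm b₂, horth, add_zero,
      zero_im]

lemma map_ofReal_mulVec_complexify (y : Matrix ι ι ℝ) (a₁ a₂ : ι → ℝ) :
    y.map ofReal *ᵥ (fun i => (a₁ i : ℂ) + I * a₂ i) =
      fun i => ((y *ᵥ a₁) i : ℂ) + I * (y *ᵥ a₂) i := by
  ext i
  simp [mulVec, dotProduct, Finset.mul_sum, mul_add, Finset.sum_add_distrib, mul_left_comm]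

end Matrix

theorem stmt_10 (n : ℕ) (hn : 2 ≤ n) (a₁ a₂ : Fin n ⊕ Fin n → ℝ)
    (hind : LinearIndependent ℝ ![a₁, a₂])
    (a : Fin n ⊕ Fin n → ℂ) (ha : a = fun i => (a₁ i : ℂ) + Complex.I * (a₂ i : ℂ))
    (J : Matrix (Fin n ⊕ Fin n) (Fin n ⊕ Fin n) ℝ)
    (hJ : J = Matrix.fromBlocks 0 1 (-1) 0) :
    ∃ x : Matrix (Fin n ⊕ Fin n) (Fin n ⊕ Fin n) ℝ, IsUnit x ∧ x * J * xᵀ = J ∧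
      ((x.map (fun r => (r : ℂ)))ᵀ *ᵥ a) ⬝ᵥ ((x.map (fun r => (r : ℂ)))ᵀ *ᵥ a) = 0 := by
  have : Nontrivial (Fin n) := Fin.nontrivial_iff_two_le.2 hn
  obtain ⟨f, hf, hnorm, horth⟩ := exists_isOrthogonal_toBilin'_J_orthogonal_equal_norm hind
  have hx := SymplecticGroup.transpose_mem (toMatrix'_mem_symplecticGroup hf)
  have hJ' : J = -Matrix.J (Fin n) ℝ := by simp [hJ, Matrix.J, fromBlocks_neg]
  refine ⟨(LinearMap.toMatrix' f)ᵀ, (isUnit_iff_isUnit_det _).2 (SymplecticGroup.symplectic_det hx),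
    ?_, ?_⟩
  · rw [hJ', Matrix.mul_neg, Matrix.neg_mul, SymplecticGroup.mem_iff.1 hx]
  · rw [ha, transpose_map, transpose_transpose, map_ofReal_mulVec_complexify,
      LinearMap.toMatrix'_mulVec, LinearMap.toMatrix'_mulVec]
    exact complexify_dotProduct_self_eq_zero hnorm horth
end

section
/- Let x ∈ SL(3,ℝ) have first two rows x₁, x₂ orthogonal and of equal positive length u. Then there exists a unique y ∈ SO(3) such that x·y has the form [[u,0,0],[0,u,0],[v,w,u⁻²]] for some v, w ∈ ℝ. -/
open Matrix

theorem stmt_19 (x : Matrix (Fin 3) (Fin 3) ℝ) (hx : x.det = 1)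
    (u : ℝ) (hu : 0 < u)
    (horth : x 0 ⬝ᵥ x 1 = 0)
    (hlen1 : Real.sqrt (x 0 ⬝ᵥ x 0) = u) (hlen2 : Real.sqrt (x 1 ⬝ᵥ x 1) = u) :
    ∃! y : Matrix (Fin 3) (Fin 3) ℝ,
      y * yᵀ = 1 ∧ y.det = 1 ∧
      ∃ v w : ℝ, x * y = !![u, 0, 0; 0, u, 0; v, w, (u ^ 2)⁻¹] := by
  have hune : u ≠ 0 := ne_of_gt hu
  have hxu : IsUnit x.det := by rw [hx]; exact isUnit_one
  have hxTu : IsUnit xᵀ.det := by rw [Matrix.det_transpose, hx]; exact isUnit_one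
  set a : ℝ := x 0 ⬝ᵥ x 2 with ha
  set b : ℝ := x 1 ⬝ᵥ x 2 with hb
  set c : ℝ := x 2 ⬝ᵥ x 2 with hc
  have h00 : x 0 ⬝ᵥ x 0 = u ^ 2 := by
    have h : (0:ℝ) ≤ x 0 ⬝ᵥ x 0 := by
      simp only [dotProduct, Fin.sum_univ_three]
      nlinarith [sq_nonneg (x 0 0), sq_nonneg (x 0 1), sq_nonneg (x 0 2)]
    rw [← hlen1, Real.sq_sqrt h]
  have h11 : x 1 ⬝ᵥ x 1 = u ^ 2 := by
    have h : (0:ℝ) ≤ x 1 ⬝ᵥ x 1 := by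
      simp only [dotProduct, Fin.sum_univ_three]
      nlinarith [sq_nonneg (x 1 0), sq_nonneg (x 1 1), sq_nonneg (x 1 2)]
    rw [← hlen2, Real.sq_sqrt h]
  have hG : x * xᵀ = !![u ^ 2, 0, a; 0, u ^ 2, b; a, b, c] := by
    simp only [dotProduct, Fin.sum_univ_three] at h00 h11 horth ha hb hc
    ext i j
    fin_cases i <;> fin_cases j <;>
      simp [Matrix.mul_apply, Matrix.transpose_apply, Fin.sum_univ_three, ha, hb, hc] <;>
      linarith
  clear_value a b c
  have hgram : u ^ 4 * c - u ^ 2 * a ^ 2 - u ^ 2 * b ^ 2 = 1 := by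
    have hdet : (x * xᵀ).det = 1 := by
      rw [Matrix.det_mul, Matrix.det_transpose, hx]; ring
    rw [hG] at hdet
    simp [Matrix.det_fin_three] at hdet
    ring_nf at hdet ⊢
    linarith
  set M : Matrix (Fin 3) (Fin 3) ℝ :=
    !![u, 0, 0; 0, u, 0; a / u, b / u, (u ^ 2)⁻¹] with hM
  have hMT : Mᵀ = !![u, 0, a / u; 0, u, b / u; 0, 0, (u ^ 2)⁻¹] := by
    ext i j
    fin_cases i <;> fin_cases j <;>
      simp [hM, Matrix.transpose_apply, Matrix.vecHead, Matrix.vecTail]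
  have hMMT : M * Mᵀ = x * xᵀ := by
    rw [hG, hMT, hM, Matrix.mul_fin_three]
    ext i j
    fin_cases i <;> fin_cases j <;>
      (try simp [Matrix.vecHead, Matrix.vecTail]) <;>
      (try field_simp) <;>
      (first
        | ring1
        | linear_combination (-(u ^ 2)) * hgram
        | linear_combination (-1 : ℝ) * hgram)
  have hMdet : M.det = 1 := by
    rw [hM, Matrix.det_fin_three]
    simp [Matrix.vecHead, Matrix.vecTail]
    field_simp
    try ring
  refine ⟨x⁻¹ * M, ⟨?_, ?_, a / u, b / u, ?_⟩, ?_⟩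
  · have h1 : x⁻¹ * M * (x⁻¹ * M)ᵀ = x⁻¹ * (M * Mᵀ * (x⁻¹)ᵀ) := by
      rw [Matrix.transpose_mul]; simp only [Matrix.mul_assoc]
    rw [h1, hMMT, Matrix.transpose_nonsing_inv]
    have h2 : x * xᵀ * (xᵀ)⁻¹ = x := by
      rw [Matrix.mul_assoc, Matrix.mul_nonsing_inv _ hxTu, Matrix.mul_one]
    rw [h2, Matrix.nonsing_inv_mul _ hxu]
  · rw [Matrix.det_mul, Matrix.det_nonsing_inv, hx, hMdet]; simp
  · rw [Matrix.mul_nonsing_inv_cancel_left _ _ hxu, hM]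
  · rintro y ⟨hyo, hyd, v, w, hxy⟩
    set M' : Matrix (Fin 3) (Fin 3) ℝ :=
      !![u, 0, 0; 0, u, 0; v, w, (u ^ 2)⁻¹] with hM'
    have hG' : M' * M'ᵀ = !![u ^ 2, 0, a; 0, u ^ 2, b; a, b, c] := by
      rw [← hG, ← hxy, Matrix.transpose_mul, ← Matrix.mul_assoc, Matrix.mul_assoc x y,
        hyo, Matrix.mul_one]
    have hMT' : M'ᵀ = !![u, 0, v; 0, u, w; 0, 0, (u ^ 2)⁻¹] := by
      ext i j
      fin_cases i <;> fin_cases j <;>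
        simp [hM', Matrix.transpose_apply, Matrix.vecHead, Matrix.vecTail]
    rw [hMT', hM', Matrix.mul_fin_three] at hG'
    have h20 := congrFun (congrFun hG' 2) 0
    have h21 := congrFun (congrFun hG' 2) 1
    simp [Matrix.vecHead, Matrix.vecTail] at h20 h21
    have hv : v = a / u := by field_simp; linarith
    have hw : w = b / u := by field_simp; linarith
    have hMM : M' = M := by rw [hM', hM, hv, hw]
    rw [hMM] at hxy
    rw [← hxy, Matrix.nonsing_inv_mul_cancel_left _ _ hxu]
end
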